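/- In a nonempty ascending Gauss code w with labels numbered 1,…,n in order of first appearance, let u be the label whose second occurrence appears earliest in w. Then the prefix of w up to and including that second occurrence has the form 1^{-1} 2^{-1} … u^{-1} … v^{-1} u^{+1} for some v with u ≤ v ≤ n; i.e., all letters strictly between the first occurrence of u and the second occurrence of u are first (under) occurrences of the consecutive labels u+1,…,v. -/

import Mathlib

/-- A Gauss code over natural-number labels with signs in `ℤ`. -/
abbrev GaussCode (α : Type) : Type := List (α × ℤ)

/-- Ascending: every label occurs first with sign `-1` and second with sign `+1`. -/
def IsAscending {α : Type} [DecidableEq α] (w : GaussCode α) : Prop :=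
  ∀ x ∈ w.map Prod.fst, w.filter (fun p => decide (p.1 = x)) = [(x, -1), (x, 1)]

/-- The list of labels in order of first appearance. -/
def firstOccs {α : Type} [DecidableEq α] : List α → List α
  | [] => []
  | a :: l => a :: firstOccs (l.filter (fun b => decide (b ≠ a)))
  termination_by l => l.length
  decreasing_by simpa using Nat.lt_succ_of_le ((List.length_filter_le _ l.attach).trans_eq List.length_attach)

/-- Position `i` of the code is a second occurrence of its label. -/
def isSecondOcc (w : GaussCode ℕ) (i : ℕ) : Prop :=
  ∃ p, w[i]? = some p ∧ ((w.take i).map Prod.fst).count p.1 = 1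

/-!
Before the first second occurrence every letter is a first occurrence, so the labels of that
prefix are distinct. A prefix without repetitions is also a prefix of the first-appearance
order `1, 2, …, n`, so the first `i` labels read `1, …, i`, and in an ascending code they all
carry sign `-1`. The letter at position `i` is a second occurrence, so it carries sign `+1`,
and its label already occurred among `1, …, i`; hence `v = i` works.
-/

theorem List.take_filter_of_forall_mem_take {β : Type*} {l : List β} {p : β → Bool} {k : ℕ}
    (h : ∀ x ∈ l.take k, p x) : (l.filter p).take k = l.take k := by
  conv_lhs => rw [← List.take_append_drop k l]
  rw [List.filter_append, List.filter_eq_self.2 h, List.take_append]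
  rcases le_or_gt k l.length with hk | hk
  · simp [hk]
  · simp [List.drop_eq_nil_of_le hk.le]

theorem List.nodup_take_of_forall_getElem_not_mem_take {β : Type*} {l : List β} {i : ℕ}
    (h : ∀ j (hj : j < l.length), j < i → l[j] ∉ l.take j) : (l.take i).Nodup := by
  induction i with
  | zero => simp
  | succ i ih =>
    rw [List.take_add_one]
    rcases lt_or_ge i l.length with hi | hi
    · rw [List.getElem?_eq_getElem hi, Option.toList_some, List.nodup_append]
      refine ⟨ih fun j hj hji => h j hj (by omega), List.nodup_singleton _, ?_⟩
      intro x hx y hy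
      rw [List.mem_singleton] at hy
      rintro rfl
      exact h i hi (by omega) (hy ▸ hx)
    · simpa [List.getElem?_eq_none hi] using ih fun j hj hji => h j hj (by omega)

theorem List.count_map_fst {β γ : Type*} [DecidableEq β] (l : List (β × γ)) (x : β) :
    (l.map Prod.fst).count x = (l.filter fun p => decide (p.1 = x)).length := by
  rw [List.count_eq_length_filter, List.filter_map, List.length_map]
  rfl

section
variable {α : Type} [DecidableEq α]

theorem firstOccs_take_of_nodup : ∀ (l : List α) (k : ℕ), (l.take k).Nodup →
    (firstOccs l).take k = l.take k
  | [], _, _ => by simp [firstOccs]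
  | _, 0, _ => by simp
  | a :: l, k + 1, hnd => by
    rw [List.take_succ_cons, List.nodup_cons] at hnd
    have hfilter : (l.filter fun b => decide (b ≠ a)).take k = l.take k :=
      List.take_filter_of_forall_mem_take fun b hb => by
        simp only [ne_eq, decide_eq_true_eq]
        rintro rfl
        exact hnd.1 hb
    rw [firstOccs, List.take_succ_cons, List.take_succ_cons,
      firstOccs_take_of_nodup _ k (hfilter ▸ hnd.2), hfilter]
  termination_by l => l.length
  decreasing_by simpa using Nat.lt_succ_of_le (List.length_filter_le _ l)

theorem take_eq_range'_of_firstOccs_eq {l : List ℕ} {n k : ℕ}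
    (hl : firstOccs l = List.range' 1 n) (hk : k ≤ l.length) (hnd : (l.take k).Nodup) :
    l.take k = List.range' 1 k ∧ k ≤ n := by
  have h := firstOccs_take_of_nodup l k hnd
  rw [hl] at h
  have hkn : k ≤ n := by simpa [hk] using congrArg List.length h
  exact ⟨h ▸ List.take_range'_of_length_ge hkn, hkn⟩

namespace IsAscending
variable {w : GaussCode α}

theorem getElem?_count_take (hw : IsAscending w) {j : ℕ} (hj : j < w.length) :
    [(w[j].1, -1), (w[j].1, 1)][((w.take j).map Prod.fst).count w[j].1]? = some w[j] := by
  have hsplit := List.take_append_drop j w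
  rw [List.drop_eq_getElem_cons hj] at hsplit
  generalize w[j] = p at hsplit ⊢
  have hfilter : w.filter (fun q => decide (q.1 = p.1)) =
      (w.take j).filter (fun q => decide (q.1 = p.1)) ++
        p :: (w.drop (j + 1)).filter (fun q => decide (q.1 = p.1)) := by
    conv_lhs => rw [← hsplit]
    simp
  have hp : p.1 ∈ w.map Prod.fst := List.mem_map_of_mem (hsplit ▸ by simp)
  rw [← hw p.1 hp, hfilter, List.count_map_fst, List.getElem?_append_right le_rfl]
  simp

theorem count_take_le_one (hw : IsAscending w) {j : ℕ} (hj : j < w.length) :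
    ((w.take j).map Prod.fst).count w[j].1 ≤ 1 := by
  by_contra! h
  have h2 := hw.getElem?_count_take hj
  rw [List.getElem?_eq_none (by simp only [List.length_cons, List.length_nil]; omega)] at h2
  cases h2

theorem snd_eq_neg_one_of_count_eq_zero (hw : IsAscending w) {j : ℕ} (hj : j < w.length)
    (h : ((w.take j).map Prod.fst).count w[j].1 = 0) : w[j].2 = -1 := by
  have h2 := hw.getElem?_count_take hj
  rw [h] at h2
  simp only [List.getElem?_cons_zero, Option.some.injEq] at h2
  rw [← h2]

theorem snd_eq_one_of_count_eq_one (hw : IsAscending w) {j : ℕ} (hj : j < w.length)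
    (h : ((w.take j).map Prod.fst).count w[j].1 = 1) : w[j].2 = 1 := by
  have h2 := hw.getElem?_count_take hj
  rw [h] at h2
  simp only [List.getElem?_cons_succ, List.getElem?_cons_zero, Option.some.injEq] at h2
  rw [← h2]

theorem take_eq_map_neg_one (hw : IsAscending w) {i : ℕ}
    (h : ∀ j (hj : j < w.length), j < i → ((w.take j).map Prod.fst).count w[j].1 = 0) :
    w.take i = ((w.take i).map Prod.fst).map fun x => (x, -1) := by
  rw [List.map_map]
  conv_lhs => rw [← List.map_id (w.take i)]
  refine List.map_congr_left fun p hp => ?_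
  obtain ⟨j, hj, rfl⟩ := List.getElem_of_mem hp
  rw [List.length_take] at hj
  rw [List.getElem_take]
  exact Prod.ext rfl (hw.snd_eq_neg_one_of_count_eq_zero _ (h j (by omega) (by omega)))

end IsAscending
end

theorem isSecondOcc_iff {w : GaussCode ℕ} {j : ℕ} :
    isSecondOcc w j ↔ ∃ hj : j < w.length, ((w.take j).map Prod.fst).count w[j].1 = 1 := by
  constructor
  · rintro ⟨p, hp, hc⟩
    obtain ⟨hj, rfl⟩ := List.getElem?_eq_some_iff.1 hp
    exact ⟨hj, hc⟩
  · rintro ⟨hj, hc⟩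
    exact ⟨_, List.getElem?_eq_getElem hj, hc⟩

theorem IsAscending.count_take_eq_zero_of_forall_not_isSecondOcc {w : GaussCode ℕ}
    (hw : IsAscending w) {i : ℕ} (hmin : ∀ j < i, ¬ isSecondOcc w j) {j : ℕ}
    (hj : j < w.length) (hji : j < i) : ((w.take j).map Prod.fst).count w[j].1 = 0 := by
  have hle := hw.count_take_le_one hj
  have hne : ((w.take j).map Prod.fst).count w[j].1 ≠ 1 :=
    fun h => hmin j hji (isSecondOcc_iff.2 ⟨hj, h⟩)
  omega

theorem ascending_prefix_form_general (w : GaussCode ℕ) (n i u : ℕ)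
    (hasc : IsAscending w)
    (hnum : firstOccs (w.map Prod.fst) = List.range' 1 n)
    (hi : isSecondOcc w i) (hmin : ∀ j < i, ¬ isSecondOcc w j)
    (hu : ∃ s : ℤ, w[i]? = some (u, s)) :
    ∃ v, u ≤ v ∧ v ≤ n ∧
      w.take (i + 1) =
        ((List.range' 1 v).map fun k => ((k : ℕ), (-1 : ℤ))) ++ [(u, 1)] := by
  obtain ⟨s, hs⟩ := hu
  obtain ⟨hilen, hwi⟩ := List.getElem?_eq_some_iff.mp hs
  have hfirst : ∀ j (hj : j < w.length), j < i → ((w.take j).map Prod.fst).count w[j].1 = 0 :=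
    fun j hj hji => hasc.count_take_eq_zero_of_forall_not_isSecondOcc hmin hj hji
  obtain ⟨hlabels, hin⟩ := take_eq_range'_of_firstOccs_eq hnum (by simpa using hilen.le)
    (List.nodup_take_of_forall_getElem_not_mem_take fun j hj hji =>
      List.count_eq_zero.1 (by simpa [List.map_take] using hfirst j (by simpa using hj) hji))
  rw [← List.map_take] at hlabels
  obtain ⟨_, hcount⟩ := isSecondOcc_iff.1 hi
  have hsign : s = 1 := by simpa [hwi] using hasc.snd_eq_one_of_count_eq_one hilen hcount
  simp only [hwi] at hcount
  have hui : u ∈ List.range' 1 i := hlabels ▸ List.count_pos_iff.1 (by omega)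
  refine ⟨i, by rw [List.mem_range'_1] at hui; omega, hin, ?_⟩
  rw [List.take_add_one, hs, hasc.take_eq_map_neg_one hfirst, hlabels, hsign]
  rfl

/-- in a nonempty ascending Gauss code whose labels are numbered
`1, …, n` in order of first appearance, if `i` is the earliest position which is a
second occurrence (of label `u`), then the prefix up to and including position `i`
reads `1⁻¹ 2⁻¹ … v⁻¹ u⁺¹` for some `v` with `u ≤ v ≤ n`. -/
theorem ascending_prefix_form (w : GaussCode ℕ) (n i u : ℕ)
    (hasc : IsAscending w)
    (hnum : firstOccs (w.map Prod.fst) = List.range' 1 n)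
    (hne : w ≠ [])
    (hi : isSecondOcc w i) (hmin : ∀ j < i, ¬ isSecondOcc w j)
    (hu : ∃ s : ℤ, w[i]? = some (u, s)) :
    ∃ v, u ≤ v ∧ v ≤ n ∧
      w.take (i + 1) =
        ((List.range' 1 v).map fun k => ((k : ℕ), (-1 : ℤ))) ++ [(u, 1)] :=
  ascending_prefix_form_general w n i u hasc hnum hi hmin hu
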